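/- There exists a constant c > 0 depending only on β such that for all integers ℓ, k, n with n₀ ≤ ℓ ≤ k ≤ n, one has (γ(2^k)/γ(2^ℓ)) · ∏_{j=ℓ, j≠k}^{n} |1 − γ(2^k)/γ(2^j)|^{−1} ≤ c · 4^{β(k−ℓ)} · 2^{−(β/2)(k−ℓ)²}. -/

import Mathlib

open Filter Topology Asymptotics MeasureTheory

noncomputable section

/-- The hypotheses on the fragmentation coefficient `γ` in the region `n ≥ n₀`:
monotonicity along powers of two and two-sided power-law bounds of exponent `β`. -/
def GammaHyp (β : ℝ) (γ : ℝ → ℝ) (n₀ : ℕ) : Prop :=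
  (∀ ξ : ℝ, 0 < ξ → 0 < γ ξ) ∧
  (∀ n : ℤ, (n₀:ℤ) ≤ n → γ ((2:ℝ) ^ n) < γ ((2:ℝ) ^ (n + 1))) ∧
  ∀ n m : ℤ, (n₀:ℤ) ≤ n → (n₀:ℤ) ≤ m →
    1 / 2 * (2:ℝ) ^ (β * ((n:ℝ) - (m:ℝ))) ≤ γ ((2:ℝ) ^ n) / γ ((2:ℝ) ^ m) ∧
      γ ((2:ℝ) ^ n) / γ ((2:ℝ) ^ m) ≤ 3 / 2 * (2:ℝ) ^ (β * ((n:ℝ) - (m:ℝ)))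

/-- The fundamental solution
`Ψ_n^{(ℓ)}(t) = Σ_{k=ℓ}^n (γ(2^k)/γ(2^ℓ)) ∏_{j=ℓ, j≠k}^n (1 − γ(2^k)/γ(2^j))⁻¹ e^{−γ(2^k)t/4}`
for `n ≥ ℓ`, and `Ψ_n^{(ℓ)}(t) = 0` for `n < ℓ`. -/
def Psi (γ : ℝ → ℝ) (l n : ℤ) (t : ℝ) : ℝ :=
  if l ≤ n then
    ∑ c ∈ Finset.Icc l n,
      γ ((2:ℝ) ^ c) / γ ((2:ℝ) ^ l) *
        (∏ j ∈ (Finset.Icc l n).erase c, (1 - γ ((2:ℝ) ^ c) / γ ((2:ℝ) ^ j))⁻¹) *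
        Real.exp (-(γ ((2:ℝ) ^ c) * t / 4))
  else 0


open Finset Real

/-! Write `r_j = γ(2^k)/γ(2^j)`. For `j = k - d` the lower power-law bound gives
`r_j ≥ 2^{βd}/2`, hence `|1 - r_j|⁻¹ ≤ 2·2^{-βd} (1 - 2·2^{-βd})⁻¹`; for `j = k + d` the upper
bound gives `r_j ≤ (3/2)·2^{-βd}`, hence `|1 - r_j|⁻¹ ≤ (1 - (3/2)·2^{-βd})⁻¹`. All correction
factors have the form `(1 - x_d)⁻¹` with `x_d ≤ 2·2^{-β} < 1` decaying geometrically, so their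
product is bounded by `exp (∑ x_d / (1 - 2·2^{-β}))`, a constant depending only on `β`. What is
left is `∏_{d=1}^{m} 2·2^{-βd} = 2^{m - βm(m+1)/2}` with `m = k - ℓ`, and together with
`γ(2^k)/γ(2^ℓ) ≤ (3/2)·2^{βm}` the exponent `βm + m - βm(m+1)/2` is at most `2βm - βm²/2`
since `β ≥ 2/3`. -/

theorem Int.prod_Icc_erase {M : Type*} [CommMonoid M] (f : ℤ → M) {l k n : ℤ}
    (hlk : l ≤ k) (hkn : k ≤ n) :
    ∏ j ∈ (Icc l n).erase k, f j =
      (∏ i ∈ Finset.range (k - l).toNat, f (k - (i + 1))) *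
        ∏ i ∈ Finset.range (n - k).toNat, f (k + (i + 1)) := by
  have hsplit : (Icc l n).erase k = Ico l k ∪ Ioc k n := by
    ext j; simp only [mem_erase, mem_Icc, mem_union, mem_Ico, mem_Ioc]; omega
  have hdisj : Disjoint (Ico l k) (Ioc k n) :=
    disjoint_left.2 fun j hj hj' => by simp only [mem_Ico, mem_Ioc] at hj hj'; omega
  rw [hsplit, prod_union hdisj, Int.Ico_eq_finset_map, Int.Ioc_eq_finset_map, prod_map, prod_map,
    ← prod_range_reflect]
  congr 1
  · refine prod_congr rfl fun i hi => congrArg f ?_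
    simp only [mem_range] at hi
    simp only [Function.Embedding.trans_apply, Nat.castEmbedding_apply, addLeftEmbedding_apply]
    omega
  · refine prod_congr rfl fun i _ => congrArg f ?_
    simp only [Function.Embedding.trans_apply, Nat.castEmbedding_apply, addLeftEmbedding_apply]
    omega

theorem sum_range_two_rpow_neg_le {β : ℝ} (hβ : 1 ≤ β) (N : ℕ) :
    ∑ i ∈ range N, (2:ℝ) ^ (-(β * (i + 1))) ≤ 1 := by
  have hle : ∀ i : ℕ, (2:ℝ) ^ (-(β * (i + 1))) ≤ 1 / 2 * (1 / 2) ^ i := fun i => by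
    calc (2:ℝ) ^ (-(β * (i + 1))) ≤ 2 ^ (-((i:ℝ) + 1)) := by
          gcongr
          · norm_num
          · nlinarith [(i.cast_nonneg : (0:ℝ) ≤ i)]
      _ = 1 / 2 * (1 / 2) ^ i := by
          rw [rpow_neg (by norm_num), rpow_add_one (by norm_num), rpow_natCast]
          field_simp; rw [← mul_pow]; norm_num
  calc ∑ i ∈ range N, (2:ℝ) ^ (-(β * (i + 1))) ≤ ∑ i ∈ range N, 1 / 2 * (1 / 2 : ℝ) ^ i :=
        sum_le_sum fun i _ => hle i
    _ ≤ 1 := by rw [← mul_sum]; linarith [sum_geometric_two_le N]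

theorem prod_range_two_mul_rpow_neg (β : ℝ) (N : ℕ) :
    ∏ i ∈ range N, 2 * (2:ℝ) ^ (-(β * (i + 1))) = 2 ^ (N - β * N * (N + 1) / 2) := by
  induction N with
  | zero => simp
  | succ N ih =>
    rw [prod_range_succ, ih, mul_left_comm, ← rpow_add two_pos, mul_comm,
      ← rpow_add_one two_ne_zero]
    push_cast; ring_nf

theorem inv_one_sub_le_exp {x q : ℝ} (hx : 0 ≤ x) (hxq : x ≤ q) (hq : q < 1) :
    (1 - x)⁻¹ ≤ exp (x / (1 - q)) := by
  have h1x : 0 < 1 - x := by linarith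
  calc (1 - x)⁻¹ = x / (1 - x) + 1 := by field_simp; ring
    _ ≤ x / (1 - q) + 1 := by gcongr
    _ ≤ exp (x / (1 - q)) := add_one_le_exp _

theorem prod_inv_one_sub_le_exp {ι : Type*} (s : Finset ι) {x : ι → ℝ} {q : ℝ}
    (hx : ∀ i ∈ s, 0 ≤ x i) (hxq : ∀ i ∈ s, x i ≤ q) (hq : q < 1) :
    ∏ i ∈ s, (1 - x i)⁻¹ ≤ exp ((∑ i ∈ s, x i) / (1 - q)) := by
  rw [sum_div, exp_sum]
  exact prod_le_prod (fun i hi => inv_nonneg.2 (by linarith [hxq i hi])) fun i hi =>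
    inv_one_sub_le_exp (hx i hi) (hxq i hi) hq

theorem two_mul_two_rpow_neg_lt_one {s : ℝ} (hs : 1 < s) : 2 * (2:ℝ) ^ (-s) < 1 := by
  have : (2:ℝ) ^ (-s) < 2 ^ (-1:ℝ) := rpow_lt_rpow_of_exponent_lt (by norm_num) (by linarith)
  norm_num at this
  linarith

theorem inv_abs_one_sub_le_of_le {r x : ℝ} (hx : x < 1) (hr : r ≤ x) :
    |1 - r|⁻¹ ≤ (1 - x)⁻¹ := by
  rw [abs_of_pos (by linarith)]
  exact inv_anti₀ (by linarith) (by linarith)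

theorem inv_abs_one_sub_le_of_inv_le {r t : ℝ} (ht : 0 < t) (ht1 : 2 * t < 1)
    (hr : 1 / 2 * t⁻¹ ≤ r) : |1 - r|⁻¹ ≤ 2 * t * (1 - 2 * t)⁻¹ := by
  have hlow : (1 - 2 * t) / (2 * t) ≤ r - 1 := by
    rw [sub_div, div_self (by positivity)]; field_simp at hr ⊢; linarith
  have hpos : 0 < (1 - 2 * t) / (2 * t) := div_pos (by linarith) (by positivity)
  rw [abs_sub_comm, abs_of_pos (hpos.trans_le hlow), ← div_eq_mul_inv, ← inv_div]
  exact inv_anti₀ hpos hlow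

theorem prod_range_inv_one_sub_mul_le {β a : ℝ} (hβ : 1 < β) (ha : 0 ≤ a) (ha2 : a ≤ 2) (M : ℕ) :
    ∏ i ∈ range M, (1 - a * (2:ℝ) ^ (-(β * (i + 1))))⁻¹ ≤ exp (2 / (1 - 2 * 2 ^ (-β))) := by
  have hq := two_mul_two_rpow_neg_lt_one hβ
  refine (prod_inv_one_sub_le_exp _ (fun i _ => by positivity) (fun i _ => ?_) hq).trans ?_
  · gcongr
    · norm_num
    · nlinarith [(i.cast_nonneg : (0:ℝ) ≤ i)]
  · gcongr
    rw [← mul_sum]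
    nlinarith [sum_range_two_rpow_neg_le hβ.le M, sum_nonneg fun i (_ : i ∈ range M) =>
      (rpow_pos_of_pos two_pos (-(β * (i + 1)))).le]

theorem two_rpow_mul_two_rpow_le {β m : ℝ} (hβ : 2 / 3 ≤ β) (hm : 0 ≤ m) :
    (2:ℝ) ^ (β * m) * 2 ^ (m - β * m * (m + 1) / 2) ≤ 4 ^ (β * m) * 2 ^ (-(β / 2) * m ^ 2) := by
  rw [show (4:ℝ) = 2 ^ (2:ℝ) by norm_num, ← rpow_mul (by norm_num), ← rpow_add two_pos,
    ← rpow_add two_pos]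
  exact rpow_le_rpow_of_exponent_le (by norm_num) (by nlinarith)

namespace GammaHyp

variable {β : ℝ} {γ : ℝ → ℝ} {n₀ : ℕ}

theorem inv_abs_one_sub_ratio_le_of_lt (hβ : 1 < β) (hγ : GammaHyp β γ n₀) {j k : ℤ}
    (hj : (n₀:ℤ) ≤ j) (hjk : j < k) :
    |1 - γ ((2:ℝ) ^ k) / γ ((2:ℝ) ^ j)|⁻¹ ≤
      2 * (2:ℝ) ^ (-(β * ((k:ℝ) - j))) * (1 - 2 * (2:ℝ) ^ (-(β * ((k:ℝ) - j))))⁻¹ := by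
  have hd : (1:ℝ) ≤ k - j := by exact_mod_cast (by omega : (1:ℤ) ≤ k - j)
  refine inv_abs_one_sub_le_of_inv_le (by positivity)
    (two_mul_two_rpow_neg_lt_one (by nlinarith)) ?_
  rw [rpow_neg two_pos.le, inv_inv]
  exact (hγ.2.2 k j (hj.trans hjk.le) hj).1

theorem inv_abs_one_sub_ratio_le_of_gt (hβ : 1 < β) (hγ : GammaHyp β γ n₀) {j k : ℤ}
    (hk : (n₀:ℤ) ≤ k) (hkj : k < j) :
    |1 - γ ((2:ℝ) ^ k) / γ ((2:ℝ) ^ j)|⁻¹ ≤ (1 - 3 / 2 * (2:ℝ) ^ (-(β * ((j:ℝ) - k))))⁻¹ := by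
  have hd : (1:ℝ) ≤ j - k := by exact_mod_cast (by omega : (1:ℤ) ≤ j - k)
  have ht := two_mul_two_rpow_neg_lt_one (show 1 < β * ((j:ℝ) - k) by nlinarith)
  refine inv_abs_one_sub_le_of_le (by linarith [rpow_pos_of_pos two_pos (-(β * ((j:ℝ) - k)))]) ?_
  convert (hγ.2.2 k j hk (hk.trans hkj.le)).2 using 4
  ring

theorem prod_inv_abs_one_sub_ratio_le (hβ : 1 < β) (hγ : GammaHyp β γ n₀) {l k n : ℤ}
    (hl : (n₀:ℤ) ≤ l) (hlk : l ≤ k) (hkn : k ≤ n) :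
    ∏ j ∈ (Icc l n).erase k, |1 - γ ((2:ℝ) ^ k) / γ ((2:ℝ) ^ j)|⁻¹ ≤
      2 ^ (((k:ℝ) - l) - β * ((k:ℝ) - l) * ((k:ℝ) - l + 1) / 2) *
        exp (2 / (1 - 2 * 2 ^ (-β))) ^ 2 := by
  set E := exp (2 / (1 - 2 * (2:ℝ) ^ (-β)))
  have hN : (((k - l).toNat : ℕ) : ℝ) = k - l := by
    rw [← Int.cast_natCast, Int.toNat_of_nonneg (by omega), Int.cast_sub]
  have hleft : ∏ i ∈ range (k - l).toNat,
      |1 - γ ((2:ℝ) ^ k) / γ ((2:ℝ) ^ (k - (i + 1)))|⁻¹ ≤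
        2 ^ (((k:ℝ) - l) - β * ((k:ℝ) - l) * ((k:ℝ) - l + 1) / 2) * E := by
    calc _ ≤ ∏ i ∈ range (k - l).toNat,
          2 * (2:ℝ) ^ (-(β * (i + 1))) * (1 - 2 * (2:ℝ) ^ (-(β * (i + 1))))⁻¹ := by
          refine prod_le_prod (fun _ _ => by positivity) fun i hi => ?_
          rw [mem_range] at hi
          have h := hγ.inv_abs_one_sub_ratio_le_of_lt hβ (j := k - (i + 1)) (k := k) (by omega)
            (by omega)
          rwa [show (k:ℝ) - ((k - (i + 1) : ℤ) : ℝ) = i + 1 by push_cast; ring] at h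
      _ ≤ _ := by
          rw [prod_mul_distrib, prod_range_two_mul_rpow_neg, hN]
          exact mul_le_mul_of_nonneg_left
            (prod_range_inv_one_sub_mul_le hβ (by norm_num) le_rfl _) (by positivity)
  have hright : ∏ i ∈ range (n - k).toNat,
      |1 - γ ((2:ℝ) ^ k) / γ ((2:ℝ) ^ (k + (i + 1)))|⁻¹ ≤ E := by
    refine (prod_le_prod (fun _ _ => by positivity) fun i _ => ?_).trans
      (prod_range_inv_one_sub_mul_le (a := 3 / 2) hβ (by norm_num) (by norm_num) _)
    have h := hγ.inv_abs_one_sub_ratio_le_of_gt hβ (j := k + (i + 1)) (hl.trans hlk) (by omega)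
    rwa [show ((k + (i + 1) : ℤ) : ℝ) - k = i + 1 by push_cast; ring] at h
  rw [Int.prod_Icc_erase _ hlk hkn, sq, ← mul_assoc]
  exact mul_le_mul hleft hright (by positivity) (by positivity)

end GammaHyp

/-- There is `c > 0` depending only on `β` with
`(γ(2^k)/γ(2^ℓ)) ∏_{j=ℓ, j≠k}^n |1 − γ(2^k)/γ(2^j)|⁻¹ ≤ c 4^{β(k−ℓ)} 2^{−(β/2)(k−ℓ)²}`
for all `n₀ ≤ ℓ ≤ k ≤ n`. -/
theorem stmt12 (β : ℝ) (hβ : β ∈ Set.Ioo (1:ℝ) 2) :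
    ∃ c > (0:ℝ), ∀ (γ : ℝ → ℝ) (n₀ : ℕ), GammaHyp β γ n₀ →
      ∀ l c' n : ℤ, (n₀:ℤ) ≤ l → l ≤ c' → c' ≤ n →
        γ ((2:ℝ) ^ c') / γ ((2:ℝ) ^ l) *
            ∏ j ∈ (Finset.Icc l n).erase c', |1 - γ ((2:ℝ) ^ c') / γ ((2:ℝ) ^ j)|⁻¹ ≤
          c * (4:ℝ) ^ (β * ((c':ℝ) - (l:ℝ))) * (2:ℝ) ^ (-(β / 2) * ((c':ℝ) - (l:ℝ)) ^ 2) := by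
  obtain ⟨hβ1, -⟩ := hβ
  set E := exp (2 / (1 - 2 * (2:ℝ) ^ (-β)))
  refine ⟨3 / 2 * E ^ 2, by positivity, fun γ n₀ hγ l k n hl hlk hkn => ?_⟩
  have hm : (0:ℝ) ≤ k - l := sub_nonneg.2 (Int.cast_le.2 hlk)
  calc γ ((2:ℝ) ^ k) / γ ((2:ℝ) ^ l) *
          ∏ j ∈ (Finset.Icc l n).erase k, |1 - γ ((2:ℝ) ^ k) / γ ((2:ℝ) ^ j)|⁻¹
      ≤ 3 / 2 * (2:ℝ) ^ (β * ((k:ℝ) - l)) *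
          (2 ^ (((k:ℝ) - l) - β * ((k:ℝ) - l) * ((k:ℝ) - l + 1) / 2) * E ^ 2) :=
        mul_le_mul (hγ.2.2 k l (hl.trans hlk) hl).2
          (hγ.prod_inv_abs_one_sub_ratio_le hβ1 hl hlk hkn)
          (prod_nonneg fun _ _ => by positivity) (by positivity)
    _ = 3 / 2 * E ^ 2 * ((2:ℝ) ^ (β * ((k:ℝ) - l)) *
          2 ^ (((k:ℝ) - l) - β * ((k:ℝ) - l) * ((k:ℝ) - l + 1) / 2)) := by ring
    _ ≤ 3 / 2 * E ^ 2 * ((4:ℝ) ^ (β * ((k:ℝ) - l)) * 2 ^ (-(β / 2) * ((k:ℝ) - l) ^ 2)) := by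
        gcongr _ * ?_
        exact two_rpow_mul_two_rpow_le (by linarith : 2 / 3 ≤ β) hm
    _ = _ := by ring
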